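/- Let X be a compact Hausdorff uniform space and f : X → X continuous. Suppose f is uniform chain transitive and there exists z ∈ X such that for every entourage E there are two E-chains from z to itself with coprime lengths. Then f_2 : F_2(X) → F_2(X) is uniform chain transitive. -/

import Mathlib

open Set

variable {X : Type*}

/-- The image `E[A]` of a set `A` under an entourage (relation) `E`. -/
def entImage (E : Set (X × X)) (A : Set X) : Set X := {y | ∃ a ∈ A, (a, y) ∈ E}

/-- The hyperspace relation `2^E`: `(A, B) ∈ 2^E` iff `A ⊆ E[B]` and `B ⊆ E[A]`. -/
def hyperRel (E : Set (X × X)) (A B : Set X) : Prop :=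
  A ⊆ entImage E B ∧ B ⊆ entImage E A

/-- An `E`-chain of length `m` from `x` to `y` for the map `f`. -/
def HasChain (f : X → X) (E : Set (X × X)) (m : ℕ) (x y : X) : Prop :=
  ∃ z : ℕ → X, z 0 = x ∧ z m = y ∧ ∀ i < m, (f (z i), z (i + 1)) ∈ E

/-- `f` is uniform chain transitive: every pair of points is joined by an
`E`-chain of length at least `1`, for every entourage `E`. -/
def UCT [UniformSpace X] (f : X → X) : Prop :=
  ∀ x y : X, ∀ E ∈ uniformity X, ∃ m, 1 ≤ m ∧ HasChain f E m x y

/-- A `2^E`-chain of length `m` from `A` to `B` inside the collection `S` of subsets of `X`,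
for the induced map `A ↦ f(A)`. -/
def HyperChain (f : X → X) (E : Set (X × X)) (S : Set (Set X)) (m : ℕ)
    (A B : Set X) : Prop :=
  ∃ Z : ℕ → Set X, Z 0 = A ∧ Z m = B ∧ (∀ i ≤ m, Z i ∈ S) ∧
    ∀ i < m, hyperRel E (f '' Z i) (Z (i + 1))

/-- The induced map on the hyperspace `S ⊆ 𝒫(X)` is uniform chain transitive:
any two members of `S` are joined by `2^E`-chains inside `S`, for every entourage `E`
(the sets `2^E`, `E ∈ 𝒰`, form a base of the induced uniformity `2^𝒰`). -/
def HyperUCT [UniformSpace X] (f : X → X) (S : Set (Set X)) : Prop :=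
  ∀ A ∈ S, ∀ B ∈ S, ∀ E ∈ uniformity X, ∃ m, 1 ≤ m ∧ HyperChain f E S m A B

/-- The hyperspace `2^X` of nonempty closed subsets of `X`. -/
def hyClosed [TopologicalSpace X] : Set (Set X) := {A : Set X | A.Nonempty ∧ IsClosed A}

/-- The hyperspace `F_n(X)` of nonempty subsets of `X` with at most `n` points. -/
def hyFn (X : Type*) (n : ℕ) : Set (Set X) :=
  {A : Set X | A.Nonempty ∧ A.Finite ∧ A.ncard ≤ n}

/-- The hyperspace `F(X)` of all finite nonempty subsets of `X`. -/
def hyFin (X : Type*) : Set (Set X) := {A : Set X | A.Nonempty ∧ A.Finite}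

/-- The hyperspace `C(X)` of nonempty closed connected subsets of `X`. -/
def hyConn [TopologicalSpace X] : Set (Set X) := {A : Set X | IsClosed A ∧ IsConnected A}


lemma hasChain_trans {f : X → X} {E : Set (X × X)} {m n : ℕ} {x y w : X}
    (h1 : HasChain f E m x y) (h2 : HasChain f E n y w) :
    HasChain f E (m + n) x w := by
  obtain ⟨z1, hz10, hz1m, hz1⟩ := h1
  obtain ⟨z2, hz20, hz2n, hz2⟩ := h2
  refine ⟨fun i => if i ≤ m then z1 i else z2 (i - m), ?_, ?_, ?_⟩
  · simp [hz10]
  · rcases Nat.eq_zero_or_pos n with h | h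
    · subst h
      simp only [Nat.add_zero, le_refl, if_pos]
      rw [hz1m, ← hz20, hz2n]
    · have h' : ¬ (m + n ≤ m) := by omega
      simp only [h', if_neg, if_false]
      rw [Nat.add_sub_cancel_left, hz2n]
  · intro i hi
    by_cases h : i + 1 ≤ m
    · have hi' : i ≤ m := by omega
      simp only [hi', h, if_pos]
      exact hz1 i (by omega)
    · by_cases h' : i ≤ m
      · have him : i = m := by omega
        subst him
        simp only [h', h, if_pos, if_neg, if_false]
        have : i + 1 - i = 1 := by omega
        rw [this, hz1m, ← hz20]
        exact hz2 0 (by omega)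
      · have h'' : ¬ (i + 1 ≤ m) := h
        simp only [h', h'', if_neg, if_false]
        have : i + 1 - m = (i - m) + 1 := by omega
        rw [this]
        exact hz2 (i - m) (by omega)

lemma hasChain_zero {f : X → X} {E : Set (X × X)} (x : X) : HasChain f E 0 x x :=
  ⟨fun _ => x, rfl, rfl, fun i hi => absurd hi (by omega)⟩

lemma hasChain_mul {f : X → X} {E : Set (X × X)} {p : ℕ} {x : X}
    (h : HasChain f E p x x) : ∀ r, HasChain f E (r * p) x x := by
  intro r
  induction r with
  | zero => simpa using hasChain_zero x
  | succ r ih =>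
      have := hasChain_trans ih h
      simpa [Nat.succ_mul] using this

lemma coprime_rep {p q : ℕ} (hp : 1 ≤ p) (hq : 1 ≤ q) (hpq : Nat.Coprime p q)
    {n : ℕ} (hn : p * q ≤ n) : ∃ r s, n = r * p + s * q := by
  haveI : NeZero q := ⟨by omega⟩
  set r : ℕ := ((n : ZMod q) * (p : ZMod q)⁻¹).val with hr
  have hrlt : r < q := ZMod.val_lt _
  have hrp : ((r * p : ℕ) : ZMod q) = (n : ZMod q) := by
    push_cast
    rw [ZMod.natCast_val, ZMod.cast_id]
    rw [mul_assoc, ZMod.inv_mul_of_unit]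
    · ring
    · exact (ZMod.unitOfCoprime p hpq).isUnit
  have hle : r * p ≤ n := by
    have h1 : r * p < q * p := (Nat.mul_lt_mul_right (show 0 < p by omega)).mpr hrlt
    have h2 : q * p = p * q := Nat.mul_comm _ _
    omega
  have hdvd : q ∣ (n - r * p) := by
    have : ((n - r * p : ℕ) : ZMod q) = 0 := by
      rw [Nat.cast_sub hle, hrp, sub_self]
    exact (ZMod.natCast_eq_zero_iff _ _).mp this
  obtain ⟨s, hs⟩ := hdvd
  refine ⟨r, s, ?_⟩
  rw [mul_comm q s] at hs
  omega

lemma mem_hyFn_pair (a b : X) : {a, b} ∈ hyFn X 2 := by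
  refine ⟨⟨a, by simp⟩, (Set.finite_singleton b).insert a, ?_⟩
  calc ({a, b} : Set X).ncard ≤ ({b} : Set X).ncard + 1 := Set.ncard_insert_le a {b}
  _ ≤ 2 := by simp

lemma exists_pair_of_mem_hyFn2 {A : Set X} (hA : A ∈ hyFn X 2) :
    ∃ a b, A = {a, b} := by
  obtain ⟨hne, hfin, hcard⟩ := hA
  have hpos : 0 < A.ncard := (Set.ncard_pos hfin).mpr hne
  interval_cases h : A.ncard
  · obtain ⟨a, ha⟩ := Set.ncard_eq_one.mp h
    exact ⟨a, a, by simp [ha]⟩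
  · obtain ⟨a, b, _, hab⟩ := Set.ncard_eq_two.mp h
    exact ⟨a, b, hab⟩

theorem stmt8 [UniformSpace X] [CompactSpace X] [T2Space X] (f : X → X)
    (hf : Continuous f) (h1 : UCT f) (z : X)
    (h2 : ∀ E ∈ uniformity X, ∃ p q, 1 ≤ p ∧ 1 ≤ q ∧ Nat.Coprime p q ∧
      HasChain f E p z z ∧ HasChain f E q z z) :
    HyperUCT f (hyFn X 2) := by
  intro A hA B hB E hE
  -- symmetric entourage inside E
  set D := SetRel.symmetrize E with hD
  have hDmem : D ∈ uniformity X := symmetrize_mem_uniformity hE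
  have hDsymm : D.IsSymm := SetRel.isSymm_symmetrize
  have hDE : D ⊆ E := SetRel.symmetrize_subset_self
  obtain ⟨a₁, a₂, hAeq⟩ := exists_pair_of_mem_hyFn2 hA
  obtain ⟨b₁, b₂, hBeq⟩ := exists_pair_of_mem_hyFn2 hB
  obtain ⟨m₁, hm₁, hc₁⟩ := h1 a₁ z D hDmem
  obtain ⟨m₂, hm₂, hc₂⟩ := h1 a₂ z D hDmem
  obtain ⟨n₁, hn₁, hd₁⟩ := h1 z b₁ D hDmem
  obtain ⟨n₂, hn₂, hd₂⟩ := h1 z b₂ D hDmem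
  obtain ⟨p, q, hp, hq, hpq, hlp, hlq⟩ := h2 D hDmem
  set N := m₁ + n₁ + m₂ + n₂ + p * q with hN
  obtain ⟨r₁, s₁, hrs₁⟩ := coprime_rep hp hq hpq (n := N - (m₁ + n₁)) (by omega)
  obtain ⟨r₂, s₂, hrs₂⟩ := coprime_rep hp hq hpq (n := N - (m₂ + n₂)) (by omega)
  -- chains of common length N
  have hchain₁ : HasChain f D N a₁ b₁ := by
    have := hasChain_trans (hasChain_trans (hasChain_trans hc₁ (hasChain_mul hlp r₁))
      (hasChain_mul hlq s₁)) hd₁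
    have hlen : m₁ + r₁ * p + s₁ * q + n₁ = N := by omega
    rwa [hlen] at this
  have hchain₂ : HasChain f D N a₂ b₂ := by
    have := hasChain_trans (hasChain_trans (hasChain_trans hc₂ (hasChain_mul hlp r₂))
      (hasChain_mul hlq s₂)) hd₂
    have hlen : m₂ + r₂ * p + s₂ * q + n₂ = N := by omega
    rwa [hlen] at this
  obtain ⟨c₁, hc₁0, hc₁N, hc₁step⟩ := hchain₁
  obtain ⟨c₂, hc₂0, hc₂N, hc₂step⟩ := hchain₂
  refine ⟨N, by omega, fun i => {c₁ i, c₂ i}, ?_, ?_, ?_, ?_⟩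
  · show ({c₁ 0, c₂ 0} : Set X) = A
    rw [hc₁0, hc₂0, hAeq]
  · show ({c₁ N, c₂ N} : Set X) = B
    rw [hc₁N, hc₂N, hBeq]
  · intro i _
    exact mem_hyFn_pair _ _
  · intro i hi
    have him : f '' {c₁ i, c₂ i} = {f (c₁ i), f (c₂ i)} := Set.image_pair f _ _
    rw [him]
    have h1s : (f (c₁ i), c₁ (i + 1)) ∈ D := hc₁step i hi
    have h2s : (f (c₂ i), c₂ (i + 1)) ∈ D := hc₂step i hi
    constructor
    · rintro x (rfl | rfl)
      · exact ⟨c₁ (i + 1), by simp, hDE (SetRel.symm D h1s)⟩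
      · exact ⟨c₂ (i + 1), by simp, hDE (SetRel.symm D h2s)⟩
    · rintro x (rfl | rfl)
      · exact ⟨f (c₁ i), by simp, hDE h1s⟩
      · exact ⟨f (c₂ i), by simp, hDE h2s⟩
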